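/- arXiv:2501.00404 — 5 statements merged into one kernel-verified Lean document; each statement's English description precedes it below -/
import Mathlib

section
/- Let t(s) = s^3 + s^2 - s. Then every s > 0 with t(s) < t(0) exists (e.g. t(1/3) = -5/27 < 0), the infimum of t over s ≥ 0 equals -5/27 attained at s = 1/3, and t(s) → -∞ as s → -∞. Consequently, there exists σ > 0 such that the global minimizer of m_σ(s) = t(s) + (σ/4)|s|^4 over ℝ is negative, i.e. the global minimizer of the regularized model is not a descent direction (t'(0) = -1 < 0 means positive s are descent directions). -/
/-!
On `s ≥ 0` the cubic `t(s) = s³ + s² - s` is bounded below by `-5/27`, because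
`t(s) + 5/27 = (s - 1/3)² (s + 5/3)`. On the negative axis it reaches `t(-2) = -2`, and the
quartic term adds only `4σ` there. So for small `σ` the regularized model is lower at `-2` than
anywhere on `[0, ∞)`, and its global minimizer is negative.
-/

open Filter

namespace QuarticRegularization

def taylor (s : ℝ) : ℝ := s ^ 3 + s ^ 2 - s

noncomputable def model (σ s : ℝ) : ℝ := taylor s + σ / 4 * |s| ^ 4

theorem taylor_add_five_div_27 (s : ℝ) : taylor s + 5 / 27 = (s - 1 / 3) ^ 2 * (s + 5 / 3) := by
  unfold taylor; ring

theorem taylor_one_third : taylor (1 / 3) = -5 / 27 := by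
  norm_num [taylor]

theorem neg_five_div_27_le_taylor {s : ℝ} (hs : 0 ≤ s) : -5 / 27 ≤ taylor s := by
  have : 0 ≤ (s - 1 / 3) ^ 2 * (s + 5 / 3) := by positivity
  linarith [taylor_add_five_div_27 s]

theorem isLeast_taylor_image_Ici : IsLeast (taylor '' Set.Ici 0) (-5 / 27) := by
  refine ⟨⟨1 / 3, by norm_num, taylor_one_third⟩, ?_⟩
  rintro _ ⟨s, hs, rfl⟩
  exact neg_five_div_27_le_taylor hs

theorem taylor_le_self {s : ℝ} (hs : s ≤ -2) : taylor s ≤ s := by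
  have hfactor : taylor s - s = -s * -(s + 2) * (s - 1) := by unfold taylor; ring
  have : -s * -(s + 2) * (s - 1) ≤ 0 :=
    mul_nonpos_of_nonneg_of_nonpos (mul_nonneg (by linarith) (by linarith)) (by linarith)
  linarith

theorem tendsto_taylor_atBot : Tendsto taylor atBot atBot :=
  tendsto_atBot_mono' atBot ((eventually_le_atBot (-2)).mono fun _ ↦ taylor_le_self) tendsto_id

theorem taylor_le_model {σ : ℝ} (hσ : 0 ≤ σ) (s : ℝ) : taylor s ≤ model σ s := by
  unfold model
  have : 0 ≤ σ / 4 * |s| ^ 4 := by positivity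
  linarith

theorem model_neg_two (σ : ℝ) : model σ (-2) = -2 + 4 * σ := by
  norm_num [model, taylor]; ring

theorem neg_of_forall_model_le {σ s : ℝ} (hσ : 0 ≤ σ) (hσ_small : σ < 49 / 108)
    (hmin : ∀ x, model σ s ≤ model σ x) : s < 0 := by
  by_contra! hs
  have := hmin (-2)
  rw [model_neg_two] at this
  linarith [neg_five_div_27_le_taylor hs, taylor_le_model hσ s]

end QuarticRegularization

theorem stmt_0 :
    (∃ s : ℝ, 0 < s ∧ (s^3 + s^2 - s) < ((0:ℝ)^3 + (0:ℝ)^2 - 0)) ∧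
    ((1/3:ℝ)^3 + (1/3:ℝ)^2 - (1/3:ℝ) = -5/27) ∧
    IsLeast ((fun s : ℝ => s^3 + s^2 - s) '' Set.Ici 0) (-5/27) ∧
    Tendsto (fun s : ℝ => s^3 + s^2 - s) atBot atBot ∧
    (∃ σ : ℝ, 0 < σ ∧ ∀ s : ℝ,
      (∀ x : ℝ, s^3 + s^2 - s + σ/4 * |s|^4 ≤ x^3 + x^2 - x + σ/4 * |x|^4) → s < 0) := by
  open QuarticRegularization in
  refine ⟨⟨1 / 3, by norm_num, ?_⟩, taylor_one_third, isLeast_taylor_image_Ici,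
    tendsto_taylor_atBot, ⟨1 / 100, by norm_num, fun s hmin ↦ ?_⟩⟩
  · show taylor (1 / 3) < taylor 0
    norm_num [taylor_one_third, taylor]
  · exact neg_of_forall_model_le (by norm_num) (by norm_num) hmin
end

section
/- Let t : ℝ^d → ℝ be a polynomial of degree p with ∇t(0) ≠ 0, and let ψ : I → ℝ^d be a minimizer curve, i.e. a continuous function on an interval I ⊂ ℝ_{≥0} such that ψ(σ) is a local minimizer of m_σ(s) = t(s) + (σ/(p+1))‖s‖^{p+1} for every σ ∈ I, with ψ(σ) ≠ 0. If (c, ∞) ⊂ I for some c ≥ 0 (ψ is persistent), then ψ(σ) → 0 as σ → ∞. -/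
set_option maxHeartbeats 1000000
set_option synthInstance.maxHeartbeats 200000

open MvPolynomial Finset

private lemma coord_abs_le_norm {d : ℕ} (x : EuclideanSpace ℝ (Fin d)) (i : Fin d) :
    |x i| ≤ ‖x‖ := by
  rw [EuclideanSpace.norm_eq, ← Real.sqrt_sq_eq_abs]
  apply Real.sqrt_le_sqrt
  have := Finset.single_le_sum (f := fun j => ‖x j‖ ^ 2) (fun j _ => sq_nonneg _)
    (Finset.mem_univ i)
  simpa [Real.norm_eq_abs, sq_abs] using this

private lemma proj_norm_le_one {d : ℕ} (i : Fin d) :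
    ‖(EuclideanSpace.proj i : EuclideanSpace ℝ (Fin d) →L[ℝ] ℝ)‖ ≤ 1 := by
  apply ContinuousLinearMap.opNorm_le_bound _ zero_le_one
  intro y
  simpa [Real.norm_eq_abs] using coord_abs_le_norm y i

private lemma norm_smul_clm {E : Type*} [NormedAddCommGroup E] [NormedSpace ℝ E]
    (a : ℝ) (L : E →L[ℝ] ℝ) : ‖a • L‖ = |a| * ‖L‖ := by
  rw [norm_smul a L, Real.norm_eq_abs]

private lemma mono_fderiv {d : ℕ} (m : Fin d →₀ ℕ) (a : ℝ) (k : ℕ)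
    (hm : (∑ i, m i) ≤ k) (x : EuclideanSpace ℝ (Fin d)) :
    ∃ D : EuclideanSpace ℝ (Fin d) →L[ℝ] ℝ,
      HasFDerivAt (fun y : EuclideanSpace ℝ (Fin d) => a * ∏ i, y i ^ m i) D x ∧
      ‖D‖ ≤ |a| * (∑ i, (m i : ℝ)) * (max 1 ‖x‖) ^ (k - 1) := by
  classical
  have hg : ∀ i ∈ Finset.univ, HasFDerivAt (fun y : EuclideanSpace ℝ (Fin d) => y i ^ m i)
      (((m i : ℝ) * x i ^ (m i - 1)) •
        (EuclideanSpace.proj i : EuclideanSpace ℝ (Fin d) →L[ℝ] ℝ)) x := by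
    intro i _
    have h1 := (EuclideanSpace.proj i : EuclideanSpace ℝ (Fin d) →L[ℝ] ℝ).hasFDerivAt (x := x)
    have h2 := (hasDerivAt_pow (m i) (x i)).comp_hasFDerivAt x h1
    simpa [Function.comp_def] using h2
  have hprod := HasFDerivAt.finset_prod hg
  have hfull := hprod.const_mul a
  refine ⟨_, hfull, ?_⟩
  set M := max 1 ‖x‖ with hMdef
  have hM1 : (1 : ℝ) ≤ M := le_max_left _ _
  have hM0 : (0 : ℝ) ≤ M := zero_le_one.trans hM1
  have hxM : ∀ j, |x j| ≤ M := fun j => (coord_abs_le_norm x j).trans (le_max_right _ _)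
  rw [norm_smul_clm, mul_assoc]
  apply mul_le_mul_of_nonneg_left _ (abs_nonneg a)
  calc ‖∑ i, (∏ j ∈ Finset.univ.erase i, x j ^ m j) • (((m i : ℝ) * x i ^ (m i - 1)) •
          (EuclideanSpace.proj i : EuclideanSpace ℝ (Fin d) →L[ℝ] ℝ))‖
      ≤ ∑ i, ‖(∏ j ∈ Finset.univ.erase i, x j ^ m j) • (((m i : ℝ) * x i ^ (m i - 1)) •
          (EuclideanSpace.proj i : EuclideanSpace ℝ (Fin d) →L[ℝ] ℝ))‖ := norm_sum_le _ _
    _ ≤ ∑ i, (m i : ℝ) * M ^ (k - 1) := by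
        apply Finset.sum_le_sum
        intro i _
        rcases Nat.eq_zero_or_pos (m i) with h0 | h1
        · simp [h0]
        · have hprodle : |∏ j ∈ Finset.univ.erase i, x j ^ m j|
              ≤ M ^ (∑ j ∈ Finset.univ.erase i, m j) := by
            rw [Finset.abs_prod, ← Finset.prod_pow_eq_pow_sum]
            apply Finset.prod_le_prod (fun j _ => abs_nonneg _)
            intro j _
            rw [abs_pow]
            exact pow_le_pow_left₀ (abs_nonneg _) (hxM j) _
          have hele : |(m i : ℝ) * x i ^ (m i - 1)| ≤ (m i : ℝ) * M ^ (m i - 1) := by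
            rw [abs_mul, abs_pow, Nat.abs_cast]
            exact mul_le_mul_of_nonneg_left
              (pow_le_pow_left₀ (abs_nonneg _) (hxM i) _) (Nat.cast_nonneg _)
          calc ‖(∏ j ∈ Finset.univ.erase i, x j ^ m j) • (((m i : ℝ) * x i ^ (m i - 1)) •
                  (EuclideanSpace.proj i : EuclideanSpace ℝ (Fin d) →L[ℝ] ℝ))‖
              = |∏ j ∈ Finset.univ.erase i, x j ^ m j| * (|(m i : ℝ) * x i ^ (m i - 1)| *
                  ‖(EuclideanSpace.proj i : EuclideanSpace ℝ (Fin d) →L[ℝ] ℝ)‖) := by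
                rw [norm_smul_clm, norm_smul_clm]
            _ ≤ M ^ (∑ j ∈ Finset.univ.erase i, m j) * (((m i : ℝ) * M ^ (m i - 1)) * 1) := by
                apply mul_le_mul hprodle _ (by positivity) (by positivity)
                exact mul_le_mul hele (proj_norm_le_one i) (norm_nonneg _) (by positivity)
            _ = (m i : ℝ) * M ^ ((∑ j ∈ Finset.univ.erase i, m j) + (m i - 1)) := by
                rw [pow_add]; ring
            _ ≤ (m i : ℝ) * M ^ (k - 1) := by
                apply mul_le_mul_of_nonneg_left _ (Nat.cast_nonneg _)
                apply pow_le_pow_right₀ hM1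
                have hsum : (∑ j ∈ Finset.univ.erase i, m j) + m i = ∑ j, m j :=
                  Finset.sum_erase_add _ _ (Finset.mem_univ i)
                omega
    _ = (∑ i, (m i : ℝ)) * M ^ (k - 1) := by rw [← Finset.sum_mul]

private lemma poly_fderiv {d : ℕ} (Q : MvPolynomial (Fin d) ℝ) (k : ℕ)
    (hk : Q.totalDegree ≤ k) :
    ∃ C : ℝ, 0 ≤ C ∧ ∀ x : EuclideanSpace ℝ (Fin d),
      ∃ D : EuclideanSpace ℝ (Fin d) →L[ℝ] ℝ,
        HasFDerivAt (fun y : EuclideanSpace ℝ (Fin d) =>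
          MvPolynomial.eval (fun i => y i) Q) D x ∧
        ‖D‖ ≤ C * (max 1 ‖x‖) ^ (k - 1) := by
  classical
  refine ⟨∑ m ∈ Q.support, |Q.coeff m| * (∑ i, (m i : ℝ)), by positivity, fun x => ?_⟩
  have hdm : ∀ m ∈ Q.support, (∑ i, m i) ≤ k := by
    intro m hm
    have h1 : (m.sum fun _ e => e) ≤ Q.totalDegree := MvPolynomial.le_totalDegree hm
    have h2 : (m.sum fun _ e => e) = ∑ i, m i := Finsupp.sum_fintype _ _ (fun _ => rfl)
    omega
  have H : ∀ m ∈ Q.support, ∃ D : EuclideanSpace ℝ (Fin d) →L[ℝ] ℝ,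
      HasFDerivAt (fun y : EuclideanSpace ℝ (Fin d) => Q.coeff m * ∏ i, y i ^ m i) D x ∧
      ‖D‖ ≤ |Q.coeff m| * (∑ i, (m i : ℝ)) * (max 1 ‖x‖) ^ (k - 1) :=
    fun m hm => mono_fderiv m (Q.coeff m) k (hdm m hm) x
  choose! D hD hDb using H
  refine ⟨∑ m ∈ Q.support, D m, ?_, ?_⟩
  · have hsum := HasFDerivAt.fun_sum (fun m (hm : m ∈ Q.support) => hD m hm)
    have heq : (fun y : EuclideanSpace ℝ (Fin d) => MvPolynomial.eval (fun i => y i) Q)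
        = fun y : EuclideanSpace ℝ (Fin d) => ∑ m ∈ Q.support, Q.coeff m * ∏ i, y i ^ m i := by
      funext y
      exact MvPolynomial.eval_eq' _ _
    rw [heq]
    exact hsum
  · calc ‖∑ m ∈ Q.support, D m‖ ≤ ∑ m ∈ Q.support, ‖D m‖ := norm_sum_le _ _
      _ ≤ ∑ m ∈ Q.support, |Q.coeff m| * (∑ i, (m i : ℝ)) * (max 1 ‖x‖) ^ (k - 1) :=
          Finset.sum_le_sum (fun m hm => hDb m hm)
      _ = _ := by rw [← Finset.sum_mul]

theorem stmt_2 (d p : ℕ) (P : MvPolynomial (Fin d) ℝ)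
    (t : EuclideanSpace ℝ (Fin d) → ℝ)
    (ht : ∀ x, t x = MvPolynomial.eval (fun i => x i) P)
    (hdeg : P.totalDegree = p)
    (hg0 : gradient t 0 ≠ 0)
    (I : Set ℝ) (hI0 : I ⊆ Set.Ici 0) (hIconn : I.OrdConnected)
    (ψ : ℝ → EuclideanSpace ℝ (Fin d))
    (hcont : ContinuousOn ψ I)
    (hmin : ∀ σ ∈ I, IsLocalMin (fun x => t x + σ / ((p : ℝ) + 1) * ‖x‖ ^ (p + 1)) (ψ σ))
    (hne : ∀ σ ∈ I, ψ σ ≠ 0)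
    (c : ℝ) (hc : 0 ≤ c) (hpers : Set.Ioi c ⊆ I) :
    Filter.Tendsto ψ Filter.atTop (nhds 0) := by
  classical
  -- p must be positive
  rcases Nat.eq_zero_or_pos p with hp0 | hp1
  · exfalso
    have hdeg0 : P.totalDegree = 0 := by omega
    have hPC : P = MvPolynomial.C (P.coeff 0) := by
      ext m
      rcases eq_or_ne m 0 with rfl | hm
      · simp
      · rw [MvPolynomial.coeff_C, if_neg (Ne.symm hm)]
        by_contra hne'
        have hms : m ∈ P.support := MvPolynomial.mem_support_iff.mpr hne'
        have hall := (MvPolynomial.totalDegree_eq_zero_iff _ P).mp hdeg0 m hms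
        exact hm (Finsupp.ext hall)
    have htc : t = fun _ => P.coeff 0 := by
      funext x
      rw [ht x, hPC]
      simp
    rw [htc] at hg0
    exact hg0 (gradient_const _ _)
  -- main case
  have ht' : t = fun y : EuclideanSpace ℝ (Fin d) => MvPolynomial.eval (fun i => y i) P :=
    funext ht
  subst ht'
  obtain ⟨C, hC0, hC⟩ := poly_fderiv P p (le_of_eq hdeg)
  have key : ∀ σ ∈ I, σ * ‖ψ σ‖ ^ p ≤ C * (max 1 ‖ψ σ‖) ^ (p - 1) := by
    intro σ hσ
    have hσ0 : (0 : ℝ) ≤ σ := hI0 hσ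
    obtain ⟨D, hD, hDb⟩ := hC (ψ σ)
    have hs0 : ψ σ ≠ 0 := hne σ hσ
    have hsn : (0 : ℝ) < ‖ψ σ‖ := norm_pos_iff.mpr hs0
    have hp1' : (1 : ℝ) < (p : ℝ) + 1 := by
      have : (1 : ℝ) ≤ (p : ℝ) := by exact_mod_cast hp1
      linarith
    have hn := hasFDerivAt_norm_rpow (ψ σ) hp1'
    have hn2 := hn.const_mul (σ / ((p : ℝ) + 1))
    have heq : (fun x : EuclideanSpace ℝ (Fin d) => σ / ((p : ℝ) + 1) * ‖x‖ ^ ((p : ℝ) + 1))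
        = fun x : EuclideanSpace ℝ (Fin d) => σ / ((p : ℝ) + 1) * ‖x‖ ^ (p + 1) := by
      funext x
      rw [show ((p : ℝ) + 1) = ((p + 1 : ℕ) : ℝ) by push_cast; ring, Real.rpow_natCast]
    rw [heq] at hn2
    have hsum := hD.add hn2
    have hzero := (hmin σ hσ).hasFDerivAt_eq_zero hsum
    have hDeq : D = -((σ / ((p : ℝ) + 1)) •
        ((((p : ℝ) + 1) * ‖ψ σ‖ ^ ((p : ℝ) + 1 - 2)) • innerSL ℝ (ψ σ))) :=
      eq_neg_of_add_eq_zero_left hzero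
    have hnormD : ‖D‖ = σ * ‖ψ σ‖ ^ p := by
      rw [hDeq, norm_neg, norm_smul_clm, norm_smul_clm, innerSL_apply_norm, abs_mul,
        abs_of_nonneg (div_nonneg hσ0 (by positivity)),
        abs_of_nonneg (by positivity : (0:ℝ) ≤ (p : ℝ) + 1),
        abs_of_nonneg (Real.rpow_nonneg (norm_nonneg _) _)]
      have h1 : ‖ψ σ‖ ^ ((p : ℝ) + 1 - 2) * ‖ψ σ‖ = ‖ψ σ‖ ^ p := by
        rw [show ((p : ℝ) + 1 - 2) = (p : ℝ) - 1 by ring,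
          ← Real.rpow_add_one hsn.ne' ((p : ℝ) - 1),
          show ((p : ℝ) - 1 + 1) = ((p : ℕ) : ℝ) by ring, Real.rpow_natCast]
      rw [mul_assoc ((p : ℝ) + 1), h1]
      have hpne : ((p : ℝ) + 1) ≠ 0 := by positivity
      field_simp
    rw [hnormD] at hDb
    exact hDb
  rw [NormedAddCommGroup.tendsto_nhds_zero]
  intro ε hε
  set ε' := min ε 1 with hε'def
  have hε'0 : 0 < ε' := lt_min hε one_pos
  have hε'1 : ε' ≤ 1 := min_le_right _ _
  filter_upwards [Filter.eventually_gt_atTop (max c (C / ε' ^ p))] with σ hσgt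
  have hσc : c < σ := (le_max_left _ _).trans_lt hσgt
  have hσI : σ ∈ I := hpers hσc
  have hσ0 : (0 : ℝ) ≤ σ := hI0 hσI
  have hkey := key σ hσI
  by_contra hcon
  push_neg at hcon
  have hε'r : ε' ≤ ‖ψ σ‖ := (min_le_left _ _).trans hcon
  have hC' : σ * ε' ^ p ≤ C := by
    rcases le_or_gt ‖ψ σ‖ 1 with hr1 | hr1
    · rw [max_eq_left hr1, one_pow, mul_one] at hkey
      calc σ * ε' ^ p ≤ σ * ‖ψ σ‖ ^ p :=
            mul_le_mul_of_nonneg_left (pow_le_pow_left₀ hε'0.le hε'r p) hσ0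
        _ ≤ C := hkey
    · rw [max_eq_right hr1.le] at hkey
      have hrp : ‖ψ σ‖ ^ p = ‖ψ σ‖ ^ (p - 1) * ‖ψ σ‖ := by
        rw [← pow_succ]
        congr 1
        omega
      have h2 : σ * ‖ψ σ‖ ^ (p - 1) ≤ C * ‖ψ σ‖ ^ (p - 1) := by
        calc σ * ‖ψ σ‖ ^ (p - 1) = σ * ‖ψ σ‖ ^ (p - 1) * 1 := (mul_one _).symm
          _ ≤ σ * ‖ψ σ‖ ^ (p - 1) * ‖ψ σ‖ :=
              mul_le_mul_of_nonneg_left hr1.le (by positivity)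
          _ = σ * ‖ψ σ‖ ^ p := by rw [hrp]; ring
          _ ≤ C * ‖ψ σ‖ ^ (p - 1) := hkey
      have hσC : σ ≤ C := le_of_mul_le_mul_right h2 (by positivity)
      calc σ * ε' ^ p ≤ σ * 1 :=
            mul_le_mul_of_nonneg_left (pow_le_one₀ hε'0.le hε'1) hσ0
        _ = σ := mul_one σ
        _ ≤ C := hσC
  have hlt : C / ε' ^ p < σ := (le_max_right _ _).trans_lt hσgt
  have : C < σ * ε' ^ p := (div_lt_iff₀ (by positivity)).mp hlt
  linarith
end

section
/- Let t : ℝ^d → ℝ be a polynomial of degree p with ∇t(0) ≠ 0 and let ψ : I → ℝ^d (I ⊂ ℝ_{≥0} an interval) be a maximal minimizer curve of the regularized models m_σ(s) = t(s) + (σ/(p+1))‖s‖^{p+1}. Then the following are equivalent: (1) there is c ≥ 0 with (c,∞) ⊂ I (persistence); (2) (c,∞) ⊂ I for some c and lim_{σ→∞} ψ(σ) = 0; (3) inf_{σ∈I} ‖ψ(σ)‖ = 0. -/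
/-!
At a local minimizer `s` of `m_σ`, stationarity gives `‖∇t(s)‖ = σ‖s‖^p`. As `∇t` grows at most
like `C · max(1, ‖s‖)^p`, for `σ > C` this forces `‖s‖ < 1` and then `‖s‖^p ≤ C/σ`, so a persistent
curve tends to `0`. Conversely, `∇t(0) ≠ 0` keeps `‖∇t‖` away from `0` near the origin, so curve
points close to `0` need `σ ≥ ‖∇t(s)‖/‖s‖^p`, which is unbounded; hence `inf ‖ψ‖ = 0` makes the
interval `I` unbounded above, and an unbounded interval contains a ray.
-/

open Filter Topology Set

namespace MvPolynomial

variable {σ : Type*}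

theorem totalDegree_pderiv_le {R : Type*} [CommSemiring R] (i : σ) (P : MvPolynomial σ R) :
    (pderiv i P).totalDegree ≤ P.totalDegree := by
  conv_lhs => rw [P.as_sum, map_sum]
  refine totalDegree_finsetSum_le fun m hm => ?_
  rw [pderiv_monomial]
  exact (totalDegree_monomial_le _ _).trans
    ((Finsupp.degree_mono tsub_le_self).trans (le_totalDegree hm))

theorem norm_eval_le {𝕜 : Type*} [NormedField 𝕜] {x : σ → 𝕜} {r : ℝ} (hr : 1 ≤ r)
    (hx : ∀ i, ‖x i‖ ≤ r) (P : MvPolynomial σ 𝕜) :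
    ‖eval x P‖ ≤ (∑ m ∈ P.support, ‖P.coeff m‖) * r ^ P.totalDegree := by
  rw [eval_eq, Finset.sum_mul]
  refine (norm_sum_le _ _).trans (Finset.sum_le_sum fun m hm => ?_)
  have hmonomial : ∏ i ∈ m.support, ‖x i‖ ^ m i ≤ r ^ P.totalDegree :=
    calc ∏ i ∈ m.support, ‖x i‖ ^ m i
        ≤ ∏ i ∈ m.support, r ^ m i :=
          Finset.prod_le_prod (fun _ _ => by positivity)
            fun i _ => pow_le_pow_left₀ (norm_nonneg _) (hx i) _
      _ = r ^ m.degree := Finset.prod_pow_eq_pow_sum _ _ _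
      _ ≤ r ^ P.totalDegree := pow_le_pow_right₀ hr (le_totalDegree hm)
  rw [norm_mul, norm_prod]
  simp only [norm_pow]
  gcongr

variable [Fintype σ] {E : Type*} [NormedAddCommGroup E] [NormedSpace ℝ E]

theorem hasFDerivAt_eval_comp (ℓ : σ → E →L[ℝ] ℝ) (P : MvPolynomial σ ℝ) (x : E) :
    HasFDerivAt (fun y => eval (fun i => ℓ i y) P)
      (∑ i, eval (fun j => ℓ j x) (pderiv i P) • ℓ i) x := by
  classical
  induction P using MvPolynomial.induction_on with
  | C a => simpa using hasFDerivAt_const (𝕜 := ℝ) a x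
  | add P Q hP hQ => simpa [Finset.sum_add_distrib, add_smul] using hP.fun_add hQ
  | mul_X P n hP =>
    have h : HasFDerivAt (fun y => eval (fun i => ℓ i y) P * ℓ n y)
        (eval (fun j => ℓ j x) P • ℓ n + ℓ n x • ∑ i, eval (fun j => ℓ j x) (pderiv i P) • ℓ i) x :=
      hP.fun_mul (ℓ n).hasFDerivAt
    convert h using 1
    · funext y; simp
    · ext v
      simp [pderiv_X, Pi.single_apply, apply_ite, ite_mul, add_mul, Finset.sum_add_distrib,
        Finset.mul_sum, mul_assoc]

theorem continuous_fderiv_eval_comp (ℓ : σ → E →L[ℝ] ℝ) (P : MvPolynomial σ ℝ) :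
    Continuous (fderiv ℝ fun y => eval (fun i => ℓ i y) P) := by
  refine Continuous.congr ?_ fun x => ((hasFDerivAt_eval_comp ℓ P x).fderiv).symm
  exact continuous_finsetSum _ fun i _ =>
    ((continuous_eval _).comp (continuous_pi fun j => (ℓ j).continuous)).smul continuous_const

theorem exists_norm_fderiv_eval_comp_le {ℓ : σ → E →L[ℝ] ℝ} (hℓ : ∀ i, ‖ℓ i‖ ≤ 1)
    (P : MvPolynomial σ ℝ) : ∃ C, ∀ x,
      ‖fderiv ℝ (fun y => eval (fun i => ℓ i y) P) x‖ ≤ C * max 1 ‖x‖ ^ P.totalDegree := by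
  refine ⟨∑ i, ∑ m ∈ (pderiv i P).support, ‖(pderiv i P).coeff m‖, fun x => ?_⟩
  have hr : 1 ≤ max 1 ‖x‖ := le_max_left _ _
  have hℓx : ∀ j, ‖ℓ j x‖ ≤ max 1 ‖x‖ := fun j =>
    ((ℓ j).le_opNorm x).trans <| (mul_le_of_le_one_left (norm_nonneg x) (hℓ j)).trans
      (le_max_right _ _)
  rw [(hasFDerivAt_eval_comp ℓ P x).fderiv, Finset.sum_mul]
  refine (norm_sum_le _ _).trans (Finset.sum_le_sum fun i _ => ?_)
  calc ‖eval (fun j => ℓ j x) (pderiv i P) • ℓ i‖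
      ≤ ‖eval (fun j => ℓ j x) (pderiv i P)‖ :=
        (norm_smul_le _ _).trans (mul_le_of_le_one_right (norm_nonneg _) (hℓ i))
    _ ≤ (∑ m ∈ (pderiv i P).support, ‖(pderiv i P).coeff m‖) *
          max 1 ‖x‖ ^ (pderiv i P).totalDegree :=
        norm_eval_le hr hℓx _
    _ ≤ (∑ m ∈ (pderiv i P).support, ‖(pderiv i P).coeff m‖) * max 1 ‖x‖ ^ P.totalDegree := by
        gcongr
        exact totalDegree_pderiv_le i P

end MvPolynomial

theorem EuclideanSpace.norm_proj_le {ι : Type*} [Fintype ι] (i : ι) :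
    ‖EuclideanSpace.proj (𝕜 := ℝ) i‖ ≤ 1 :=
  ContinuousLinearMap.opNorm_le_bound _ zero_le_one fun x => by
    simpa using PiLp.norm_apply_le x i

theorem HasFDerivAt.norm_eq_of_isLocalMin_add_norm_pow {E : Type*} [NormedAddCommGroup E]
    [InnerProductSpace ℝ E] {f : E → ℝ} {f' : E →L[ℝ] ℝ} {x : E} {σ : ℝ} {p : ℕ}
    (hf : HasFDerivAt f f' x) (hσ : 0 ≤ σ) (hp : p ≠ 0)
    (hmin : IsLocalMin (fun y => f y + σ / (p + 1) * ‖y‖ ^ (p + 1)) x) :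
    ‖f'‖ = σ * ‖x‖ ^ p := by
  have hp1 : (1 : ℝ) < p + 1 := by norm_cast; omega
  have hreg := ((differentiable_norm_rpow (E := E) hp1) x).hasFDerivAt.const_mul (σ / (p + 1))
  have hmin' : IsLocalMin (fun y => f y + σ / (p + 1) * ‖y‖ ^ ((p : ℝ) + 1)) x := by
    simpa only [← Nat.cast_add_one, Real.rpow_natCast] using hmin
  have hzero := hmin'.hasFDerivAt_eq_zero (hf.fun_add hreg)
  rw [eq_neg_of_add_eq_zero_left hzero, norm_neg, norm_smul, norm_fderiv_norm_id_rpow x hp1,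
    add_sub_cancel_right, Real.norm_of_nonneg (by positivity), Real.rpow_natCast]
  field_simp

section Curves

variable {E : Type*} [NormedAddCommGroup E] {ψ : ℝ → E} {I : Set ℝ} {p : ℕ}

theorem tendsto_nhds_zero_of_eventually_mul_norm_pow_le {C : ℝ}
    (h : ∀ᶠ σ in atTop, σ * ‖ψ σ‖ ^ p ≤ C * max 1 ‖ψ σ‖ ^ p) : Tendsto ψ atTop (𝓝 0) := by
  rw [NormedAddGroup.tendsto_nhds_zero]
  intro ε hε
  filter_upwards [h, eventually_gt_atTop C, eventually_gt_atTop 0,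
    eventually_gt_atTop (C / ε ^ p)] with σ hσ hσC hσ0 hσε
  have hsmall : ‖ψ σ‖ < 1 := by
    by_contra! h1
    rw [max_eq_right h1] at hσ
    have := mul_lt_mul_of_pos_right hσC (pow_pos (one_pos.trans_le h1) p)
    linarith
  rw [max_eq_left hsmall.le, one_pow, mul_one] at hσ
  by_contra! hεle
  have hCε := (div_lt_iff₀ (pow_pos hε p)).mp hσε
  have := mul_le_mul_of_nonneg_left (pow_le_pow_left₀ hε.le hεle p) hσ0.le
  linarith

theorem not_bddAbove_of_zero_mem_closure_image {g : E → ℝ} (hg : ContinuousAt g 0)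
    (hg0 : 0 < g 0) (hp : p ≠ 0) (hψ : ∀ σ ∈ I, g (ψ σ) ≤ σ * ‖ψ σ‖ ^ p)
    (h0 : (0 : E) ∈ closure (ψ '' I)) : ¬BddAbove I := by
  rintro ⟨N, hN⟩
  have hsmall : Tendsto (fun x : E => N * ‖x‖ ^ p) (𝓝 0) (𝓝 0) := by
    simpa [hp] using ((continuous_norm.pow p).const_mul N).tendsto (0 : E)
  obtain ⟨_, ⟨σ, hσ, rfl⟩, hlt⟩ :=
    ((mem_closure_iff_frequently.mp h0).and_eventually (hsmall.eventually_lt hg hg0)).exists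
  have := mul_le_mul_of_nonneg_right (hN hσ) (pow_nonneg (norm_nonneg (ψ σ)) p)
  linarith [hψ σ hσ]

theorem sInf_image_norm_eq_zero_of_tendsto (hψ : Tendsto ψ atTop (𝓝 0))
    (hI : ∀ᶠ σ in atTop, σ ∈ I) : sInf ((fun σ => ‖ψ σ‖) '' I) = 0 := by
  have hbdd : BddBelow ((fun σ => ‖ψ σ‖) '' I) := ⟨0, by rintro _ ⟨σ, -, rfl⟩; positivity⟩
  refine le_antisymm (ge_of_tendsto (by simpa using hψ.norm) ?_) (Real.sInf_nonneg ?_)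
  · exact hI.mono fun σ hσ => csInf_le hbdd ⟨σ, hσ, rfl⟩
  · rintro _ ⟨σ, -, rfl⟩
    positivity

theorem zero_mem_closure_image_of_sInf_norm_eq_zero (hI : I.Nonempty)
    (h : sInf ((fun σ => ‖ψ σ‖) '' I) = 0) : (0 : E) ∈ closure (ψ '' I) := by
  refine Metric.mem_closure_iff.mpr fun ε hε => ?_
  obtain ⟨_, ⟨σ, hσ, rfl⟩, hlt⟩ := exists_lt_of_csInf_lt (hI.image _) (h ▸ hε)
  exact ⟨ψ σ, mem_image_of_mem ψ hσ, by rwa [dist_zero_left]⟩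

end Curves

theorem Set.OrdConnected.Ioi_subset_of_not_bddAbove {α : Type*} [LinearOrder α] {I : Set α}
    (hI : I.OrdConnected) {a : α} (ha : a ∈ I) (h : ¬BddAbove I) : Ioi a ⊆ I := fun x hx =>
  let ⟨_, hσ, hxσ⟩ := not_bddAbove_iff.mp h x
  hI.out ha hσ ⟨hx.le, hxσ.le⟩

theorem stmt_3_general (d p : ℕ) (P : MvPolynomial (Fin d) ℝ)
    (t : EuclideanSpace ℝ (Fin d) → ℝ)
    (ht : ∀ x, t x = MvPolynomial.eval (fun i => x i) P)
    (hdeg : P.totalDegree = p)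
    (hg0 : gradient t 0 ≠ 0)
    (I : Set ℝ) (hInonempty : I.Nonempty) (hI0 : I ⊆ Set.Ici 0) (hIconn : I.OrdConnected)
    (ψ : ℝ → EuclideanSpace ℝ (Fin d))
    (hmin : ∀ σ ∈ I, IsLocalMin (fun x => t x + σ / ((p : ℝ) + 1) * ‖x‖ ^ (p + 1)) (ψ σ)) :
    ((∃ c : ℝ, 0 ≤ c ∧ Set.Ioi c ⊆ I) ↔
      ((∃ c : ℝ, 0 ≤ c ∧ Set.Ioi c ⊆ I) ∧ Filter.Tendsto ψ Filter.atTop (nhds 0))) ∧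
    ((∃ c : ℝ, 0 ≤ c ∧ Set.Ioi c ⊆ I) ↔
      sInf ((fun σ => ‖ψ σ‖) '' I) = 0) := by
  have htP : t = fun x => MvPolynomial.eval (fun i => EuclideanSpace.proj (𝕜 := ℝ) i x) P :=
    funext ht
  have hderiv : ∀ x, HasFDerivAt t (fderiv ℝ t x) x := by
    rw [htP]
    exact fun x => (MvPolynomial.hasFDerivAt_eval_comp _ P x).differentiableAt.hasFDerivAt
  have hcont : Continuous (fderiv ℝ t) := by
    rw [htP]
    exact MvPolynomial.continuous_fderiv_eval_comp _ P
  obtain ⟨C, hC⟩ : ∃ C, ∀ x, ‖fderiv ℝ t x‖ ≤ C * max 1 ‖x‖ ^ p := by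
    rw [htP, ← hdeg]
    exact MvPolynomial.exists_norm_fderiv_eval_comp_le (E := EuclideanSpace ℝ (Fin d))
      (ℓ := EuclideanSpace.proj) EuclideanSpace.norm_proj_le P
  have hD0 : fderiv ℝ t 0 ≠ 0 := fun h => hg0 (by simp [gradient, h])
  have hp : p ≠ 0 := by
    rintro rfl
    rw [MvPolynomial.totalDegree_eq_zero_iff_eq_C] at hdeg
    exact hD0 (by rw [htP, hdeg]; simp)
  have hstat : ∀ σ ∈ I, ‖fderiv ℝ t (ψ σ)‖ = σ * ‖ψ σ‖ ^ p := fun σ hσ =>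
    (hderiv (ψ σ)).norm_eq_of_isLocalMin_add_norm_pow (hI0 hσ) hp (hmin σ hσ)
  have htendsto (h : ∃ c : ℝ, 0 ≤ c ∧ Ioi c ⊆ I) : Tendsto ψ atTop (𝓝 0) := by
    obtain ⟨c, -, hc⟩ := h
    refine tendsto_nhds_zero_of_eventually_mul_norm_pow_le (p := p) (C := C) ?_
    filter_upwards [eventually_gt_atTop c] with σ hσ
    exact hstat σ (hc hσ) ▸ hC (ψ σ)
  refine ⟨⟨fun h => ⟨h, htendsto h⟩, And.left⟩,
    fun h => sInf_image_norm_eq_zero_of_tendsto (htendsto h) ?_, fun h => ?_⟩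
  · obtain ⟨c, -, hc⟩ := h
    exact (eventually_gt_atTop c).mono hc
  · obtain ⟨a, ha⟩ := hInonempty
    refine ⟨a, hI0 ha, hIconn.Ioi_subset_of_not_bddAbove ha ?_⟩
    exact not_bddAbove_of_zero_mem_closure_image hcont.norm.continuousAt
      (norm_pos_iff.mpr hD0) hp (fun σ hσ => (hstat σ hσ).le)
      (zero_mem_closure_image_of_sInf_norm_eq_zero ⟨a, ha⟩ h)

theorem stmt_3 (d p : ℕ) (P : MvPolynomial (Fin d) ℝ)
    (t : EuclideanSpace ℝ (Fin d) → ℝ)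
    (ht : ∀ x, t x = MvPolynomial.eval (fun i => x i) P)
    (hdeg : P.totalDegree = p)
    (hg0 : gradient t 0 ≠ 0)
    (I : Set ℝ) (hInonempty : I.Nonempty) (hI0 : I ⊆ Set.Ici 0) (hIconn : I.OrdConnected)
    (ψ : ℝ → EuclideanSpace ℝ (Fin d))
    (hcont : ContinuousOn ψ I)
    (hmin : ∀ σ ∈ I, IsLocalMin (fun x => t x + σ / ((p : ℝ) + 1) * ‖x‖ ^ (p + 1)) (ψ σ))
    (hmax : ∀ (J : Set ℝ) (φ : ℝ → EuclideanSpace ℝ (Fin d)),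
      J ⊆ Set.Ici 0 → J.OrdConnected → I ⊆ J → ContinuousOn φ J →
      (∀ σ ∈ J, IsLocalMin (fun x => t x + σ / ((p : ℝ) + 1) * ‖x‖ ^ (p + 1)) (φ σ)) →
      (∀ σ ∈ I, φ σ = ψ σ) → J = I) :
    ((∃ c : ℝ, 0 ≤ c ∧ Set.Ioi c ⊆ I) ↔
      ((∃ c : ℝ, 0 ≤ c ∧ Set.Ioi c ⊆ I) ∧ Filter.Tendsto ψ Filter.atTop (nhds 0))) ∧
    ((∃ c : ℝ, 0 ≤ c ∧ Set.Ioi c ⊆ I) ↔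
      sInf ((fun σ => ‖ψ σ‖) '' I) = 0) :=
  stmt_3_general d p P t ht hdeg hg0 I hInonempty hI0 hIconn ψ hmin
end

section
/- Let g ∈ ℝ^n with g ≠ 0, H ∈ ℝ^{n×n} symmetric, and m_σ(s) = gᵀs + (1/2)sᵀHs + (σ/3)‖s‖³. If s* is a global minimizer of m_σ for some σ ≥ 0, then (H + λ*I)s* = -g where λ* = σ‖s*‖, and H + λ*I is positive semidefinite; in particular λ* ≥ max(0, -λ_min(H)). -/
/-!
Stationarity of the cubic model at `s` gives `g + (H + λI) s = 0` with `λ = σ‖s‖`. On the sphere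
`‖x‖ = ‖s‖` the cubic terms cancel, and this identity turns `m(x) - m(s)` into
`½ (x - s)ᵀ (H + λI) (x - s)`, which is therefore nonnegative. Every direction `v` with
`⟪s, v⟫ ≠ 0` is a multiple of such a chord `x - s`, and these directions are dense, so `H + λI` is
positive semidefinite; testing it on eigenvectors of `H` bounds `λ` below by `-λ_min(H)`.
-/

open scoped RealInnerProductSpace
open Filter Topology

section

variable {E : Type*} [NormedAddCommGroup E] [InnerProductSpace ℝ E]

theorem hasFDerivAt_norm_pow {n : ℕ} (hn : 2 ≤ n) (x : E) :
    HasFDerivAt (fun x : E ↦ ‖x‖ ^ n) ((n * ‖x‖ ^ (n - 2)) • innerSL ℝ x) x := by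
  convert hasFDerivAt_norm_rpow x (p := n) (by exact_mod_cast hn) using 1
  · ext y; norm_cast
  · rw [← Real.rpow_natCast, Nat.cast_sub hn, Nat.cast_ofNat]

theorem inner_map_self_nonneg_of_inner_ne_zero (A : E →L[ℝ] E) {s v : E}
    (h : ∀ x, ‖x‖ = ‖s‖ → 0 ≤ ⟪x - s, A (x - s)⟫) (hv : ⟪s, v⟫ ≠ 0) : 0 ≤ ⟪v, A v⟫ := by
  have hv0 : v ≠ 0 := by rintro rfl; simp at hv
  -- `s + c • v` is the second point where the line through `s` in direction `v` meets the sphere.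
  set c := -2 * ⟪s, v⟫ / ‖v‖ ^ 2
  have hc : c ≠ 0 := div_ne_zero (mul_ne_zero (by norm_num) hv) (by positivity)
  have hnorm : ‖s + c • v‖ = ‖s‖ := by
    rw [← sq_eq_sq₀ (norm_nonneg _) (norm_nonneg _), norm_add_sq_real, inner_smul_right, norm_smul,
      mul_pow, Real.norm_eq_abs, sq_abs]
    have hcv : c * ‖v‖ ^ 2 = -2 * ⟪s, v⟫ := div_mul_cancel₀ _ (by positivity)
    linear_combination c * hcv
  have := h (s + c • v) hnorm
  rw [add_sub_cancel_left, map_smul, inner_smul_left, inner_smul_right, conj_trivial, ← mul_assoc,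
    ← sq] at this
  exact (mul_nonneg_iff_of_pos_left (by positivity)).1 this

theorem inner_map_self_nonneg_of_sphere (A : E →L[ℝ] E) {s : E} (hs : s ≠ 0)
    (h : ∀ x, ‖x‖ = ‖s‖ → 0 ≤ ⟪x - s, A (x - s)⟫) (v : E) : 0 ≤ ⟪v, A v⟫ := by
  rcases ne_or_eq ⟪s, v⟫ 0 with hv | hv
  · exact inner_map_self_nonneg_of_inner_ne_zero A h hv
  have hlim : Tendsto (fun t : ℝ ↦ ⟪v + t • s, A (v + t • s)⟫) (𝓝[≠] 0) (𝓝 ⟪v, A v⟫) := by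
    have : Continuous (fun t : ℝ ↦ ⟪v + t • s, A (v + t • s)⟫) := by fun_prop
    simpa using (this.tendsto 0).mono_left nhdsWithin_le_nhds
  refine ge_of_tendsto hlim (eventually_nhdsWithin_of_forall fun t ht ↦ ?_)
  refine inner_map_self_nonneg_of_inner_ne_zero A h ?_
  rw [inner_add_right, hv, inner_smul_right, real_inner_self_eq_norm_sq, zero_add]
  exact mul_ne_zero ht (by positivity)

theorem ContinuousLinearMap.IsPositive.neg_le_of_apply_eq_smul {T : E →L[ℝ] E} {c μ : ℝ}
    (h : (T + c • 1).IsPositive) {x : E} (hx : x ≠ 0) (hTx : T x = μ • x) : -c ≤ μ := by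
  have := h.inner_nonneg_left x
  rw [add_apply, smul_apply, one_apply_eq_self, hTx, ← add_smul, inner_smul_left,
    real_inner_self_eq_norm_sq, conj_trivial] at this
  have := nonneg_of_mul_nonneg_left this (by positivity)
  linarith

noncomputable def cubicModel (g : E) (T : E →L[ℝ] E) (σ : ℝ) (x : E) : ℝ :=
  ⟪g, x⟫ + 1 / 2 * ⟪x, T x⟫ + σ / 3 * ‖x‖ ^ 3

variable {g : E} {T : E →L[ℝ] E} {σ : ℝ}

theorem hasFDerivAt_cubicModel (hT : T.IsSymmetric) (x : E) :
    HasFDerivAt (cubicModel g T σ) (innerSL ℝ (g + T x + (σ * ‖x‖) • x)) x := by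
  have hquad : HasFDerivAt (fun y ↦ ⟪y, T y⟫) _ x :=
    (hasFDerivAt_id x).inner ℝ T.hasFDerivAt
  have := (((innerSL ℝ g).hasFDerivAt (x := x)).add (hquad.const_mul (1 / 2))).add
    ((hasFDerivAt_norm_pow (n := 3) (by norm_num) x).const_mul (σ / 3))
  refine this.congr_fderiv (ContinuousLinearMap.ext fun v ↦ ?_)
  have hTxv : ⟪T x, v⟫ = ⟪x, T v⟫ := hT x v
  simp only [one_div, id_eq, add_apply, coe_innerSL_apply, smul_apply,
    ContinuousLinearMap.comp_apply, ContinuousLinearMap.prod_apply, ContinuousLinearMap.id_apply,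
    fderivInnerCLM_apply, smul_eq_mul, map_add, map_smul]
  rw [← hTxv, real_inner_comm (T x) v]
  ring

theorem IsLocalMin.cubicModel_gradient_eq_zero (hT : T.IsSymmetric) {s : E}
    (h : IsLocalMin (cubicModel g T σ) s) : g + T s + (σ * ‖s‖) • s = 0 := by
  have hzero := h.hasFDerivAt_eq_zero (hasFDerivAt_cubicModel hT s)
  exact inner_self_eq_zero.1 <| by
    simpa only [innerSL_apply_apply, zero_apply] using congr($hzero (g + T s + (σ * ‖s‖) • s))

theorem cubicModel_sub_cubicModel_of_norm_eq (hT : T.IsSymmetric) {s x : E}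
    (hs : g + T s + (σ * ‖s‖) • s = 0) (hx : ‖x‖ = ‖s‖) :
    cubicModel g T σ x - cubicModel g T σ s = 1 / 2 * ⟪x - s, (T + (σ * ‖s‖) • 1) (x - s)⟫ := by
  have hg : g = -(T s + (σ * ‖s‖) • s) := eq_neg_of_add_eq_zero_left (by rwa [add_assoc] at hs)
  obtain ⟨d, rfl⟩ : ∃ d, x = s + d := ⟨x - s, by abel⟩
  have hsd : 2 * ⟪s, d⟫ + ‖d‖ ^ 2 = 0 := by
    have := norm_add_sq_real s d
    rw [hx] at this
    linarith
  have hTsd : ⟪T s, d⟫ = ⟪s, T d⟫ := hT s d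
  unfold cubicModel
  rw [hx, add_sub_cancel_left, hg]
  simp only [inner_neg_left, inner_add_left, inner_add_right, inner_smul_left, inner_smul_right,
    map_add, add_apply, smul_apply, one_apply_eq_self, real_inner_self_eq_norm_sq, conj_trivial]
  rw [real_inner_comm (T s) s, real_inner_comm (T s) d]
  linear_combination (-(σ * ‖s‖) / 2) * hsd - 1 / 2 * hTsd

theorem isPositive_add_smul_one_of_cubicModel_le (hT : T.IsSymmetric) {s : E} (hs : s ≠ 0)
    (hmin : ∀ x, cubicModel g T σ s ≤ cubicModel g T σ x) : (T + (σ * ‖s‖) • 1).IsPositive := by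
  have hstat := IsLocalMin.cubicModel_gradient_eq_zero hT (.of_forall hmin)
  refine (ContinuousLinearMap.isPositive_iff _).2 ⟨fun x y ↦ ?_, fun v ↦ ?_⟩
  · have hTxy : ⟪T x, y⟫ = ⟪x, T y⟫ := hT x y
    simp [inner_add_left, inner_add_right, inner_smul_left, inner_smul_right, hTxy]
  rw [real_inner_comm]
  refine inner_map_self_nonneg_of_sphere _ hs (fun x hx ↦ ?_) v
  linarith [hmin x, cubicModel_sub_cubicModel_of_norm_eq hT hstat hx]

end

theorem stmt_4_general (n : ℕ)
    (g : EuclideanSpace ℝ (Fin n)) (hg : g ≠ 0)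
    (H : Matrix (Fin n) (Fin n) ℝ) (hH : H.IsHermitian)
    (σ : ℝ) (hσ : 0 ≤ σ)
    (s : EuclideanSpace ℝ (Fin n))
    (hmin : ∀ x : EuclideanSpace ℝ (Fin n),
      (inner ℝ g s : ℝ) + (1/2) * (inner ℝ s (WithLp.toLp 2 (H.mulVec (fun i => s i)) : EuclideanSpace ℝ (Fin n)) : ℝ)
          + σ/3 * ‖s‖^3
        ≤ (inner ℝ g x : ℝ) + (1/2) * (inner ℝ x (WithLp.toLp 2 (H.mulVec (fun i => x i)) : EuclideanSpace ℝ (Fin n)) : ℝ)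
          + σ/3 * ‖x‖^3) :
    (H + (σ * ‖s‖) • (1 : Matrix (Fin n) (Fin n) ℝ)).mulVec (fun i => s i)
        = (-g : EuclideanSpace ℝ (Fin n)) ∧
    (H + (σ * ‖s‖) • (1 : Matrix (Fin n) (Fin n) ℝ)).PosSemidef ∧
    max 0 (-(⨅ i, hH.eigenvalues i)) ≤ σ * ‖s‖ := by
  set T := Matrix.toEuclideanCLM (𝕜 := ℝ) H
  have hT : T.IsSymmetric := Matrix.isSymmetric_toEuclideanLin_iff.2 hH
  have hstat : g + T s + (σ * ‖s‖) • s = 0 :=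
    IsLocalMin.cubicModel_gradient_eq_zero hT (.of_forall hmin)
  have hs : s ≠ 0 := by rintro rfl; exact hg (by simpa using hstat)
  have hpos := isPositive_add_smul_one_of_cubicModel_le hT hs hmin
  have hPSD : (H + (σ * ‖s‖) • 1).PosSemidef := by
    rw [← Matrix.isPositive_toEuclideanLin_iff, ← Matrix.coe_toEuclideanCLM_eq_toEuclideanLin,
      map_add, map_smul, map_one]
    exact hpos
  refine ⟨?_, hPSD, max_le (by positivity) <|
    neg_le.2 <| Real.le_iInf (fun i ↦ ?_) (neg_nonpos.2 (by positivity))⟩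
  · rw [Matrix.add_mulVec, Matrix.smul_mulVec, Matrix.one_mulVec]
    ext i
    have := congr(($hstat) i)
    simp only [PiLp.add_apply, Matrix.ofLp_toEuclideanCLM, PiLp.smul_apply, smul_eq_mul,
      PiLp.zero_apply, Pi.add_apply, Pi.smul_apply, PiLp.neg_apply, T] at this ⊢
    linarith
  · refine hpos.neg_le_of_apply_eq_smul (hH.eigenvectorBasis.orthonormal.ne_zero i) ?_
    apply WithLp.ofLp_injective
    simp [T, hH.mulVec_eigenvectorBasis]

theorem stmt_4 (n : ℕ) (hn : 0 < n)
    (g : EuclideanSpace ℝ (Fin n)) (hg : g ≠ 0)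
    (H : Matrix (Fin n) (Fin n) ℝ) (hH : H.IsHermitian)
    (σ : ℝ) (hσ : 0 ≤ σ)
    (s : EuclideanSpace ℝ (Fin n))
    (hmin : ∀ x : EuclideanSpace ℝ (Fin n),
      (inner ℝ g s : ℝ) + (1/2) * (inner ℝ s (WithLp.toLp 2 (H.mulVec (fun i => s i)) : EuclideanSpace ℝ (Fin n)) : ℝ)
          + σ/3 * ‖s‖^3
        ≤ (inner ℝ g x : ℝ) + (1/2) * (inner ℝ x (WithLp.toLp 2 (H.mulVec (fun i => x i)) : EuclideanSpace ℝ (Fin n)) : ℝ)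
          + σ/3 * ‖x‖^3) :
    (H + (σ * ‖s‖) • (1 : Matrix (Fin n) (Fin n) ℝ)).mulVec (fun i => s i)
        = (-g : EuclideanSpace ℝ (Fin n)) ∧
    (H + (σ * ‖s‖) • (1 : Matrix (Fin n) (Fin n) ℝ)).PosSemidef ∧
    max 0 (-(⨅ i, hH.eigenvalues i)) ≤ σ * ‖s‖ :=
  stmt_4_general n g hg H hH σ hσ s hmin
end

section
/- Let t be a univariate polynomial of degree p with t'(0) < 0, suppose ᾱ = min R₊ exists (R₊ as before) and is a simple root. If t'(ᾱ) = 0, then σ(α) = -t'(α)/α^p satisfies lim_{α→ᾱ⁻} σ(α) = 0, so the minimizer curve ψ defined by ψ(σ(α)) = α for α ∈ (0, ᾱ) extends to a bounded minimizer curve defined on all of (0, ∞) (it is 0-persistent). Conversely, if there exists a bounded 0-persistent minimizer curve ψ with values in (0, ᾱ], then t'(ᾱ) = 0. -/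
/-!
For `α > 0`, `α` is a critical point of `m_σ` exactly when `σ = σ(α)`, and
`σ'(α) = -(t''(α) α - p t'(α)) / α ^ (p + 1)`, which is negative on `(0, ᾱ)` because the bracket
equals `-p t'(0) > 0` at `0` and has no zero before `ᾱ`. When `t'(ᾱ) = 0`, `σ` is therefore a
decreasing bijection of `(0, ᾱ)` onto `(0, ∞)`; its continuous inverse is the curve, and since
`∂ₛ m_σ = sᵖ (σ - σ(s))` changes sign from `-` to `+` at `s = ψ σ`, each `ψ σ` is a local minimizer.
Conversely, along a minimizer curve with values in `(0, ᾱ]` we have `t'(ψ σ) = -σ (ψ σ)ᵖ → 0` as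
`σ → 0⁺`, whereas `|t'|` is bounded away from `0` on `[0, ᾱ]` unless `t'(ᾱ) = 0`.
-/

open Set Filter Topology

lemma pos_on_Ioo_of_ne_zero {q : ℝ → ℝ} {a b : ℝ} (hq : ContinuousOn q (Ico a b))
    (ha : 0 < q a) (hne : ∀ x ∈ Ioo a b, q x ≠ 0) : ∀ x ∈ Ioo a b, 0 < q x := by
  intro x hx
  by_contra! hqx
  obtain ⟨c, hc, hqc⟩ := intermediate_value_Ioo' hx.1.le (hq.mono (Icc_subset_Ico_right hx.2))
    ⟨(hne x hx).lt_of_le hqx, ha⟩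
  exact hne c ⟨hc.1, hc.2.trans hx.2⟩ hqc

lemma exists_continuousOn_inverse_of_strictAntiOn {f : ℝ → ℝ} {a b : ℝ} (hab : a < b)
    (hcont : ContinuousOn f (Ioc a b)) (hanti : StrictAntiOn f (Ioc a b))
    (htop : Tendsto f (𝓝[>] a) atTop) :
    ∃ ψ : ℝ → ℝ, ContinuousOn ψ (Ioi (f b)) ∧ MapsTo ψ (Ioi (f b)) (Ioo a b) ∧
      (∀ σ ∈ Ioi (f b), f (ψ σ) = σ) ∧ ∀ α ∈ Ioo a b, ψ (f α) = α := by
  have hsurj : SurjOn f (Ioo a b) (Ioi (f b)) := by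
    intro σ hσ
    obtain ⟨ε, hεσ, hε⟩ := ((htop.eventually_gt_atTop σ).and
      (Ioo_mem_nhdsGT hab)).exists
    obtain ⟨c, hc, hfc⟩ := intermediate_value_Ioo' hε.2.le
      (hcont.mono (Icc_subset_Ioc_left hε.1)) ⟨hσ, hεσ⟩
    exact ⟨c, ⟨hε.1.trans hc.1, hc.2⟩, hfc⟩
  have hinj : InjOn f (Ioo a b) := hanti.injOn.mono Ioo_subset_Ioc_self
  set ψ := Function.invFunOn f (Ioo a b)
  have hmaps : MapsTo ψ (Ioi (f b)) (Ioo a b) := hsurj.mapsTo_invFunOn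
  have hright : ∀ σ ∈ Ioi (f b), f (ψ σ) = σ := fun σ hσ => hsurj.rightInvOn_invFunOn hσ
  have hψanti : StrictAntiOn ψ (Ioi (f b)) := by
    intro σ₁ h₁ σ₂ h₂ h12
    have := (hanti.mono Ioo_subset_Ioc_self).lt_iff_gt (hmaps h₁) (hmaps h₂)
    rw [hright σ₁ h₁, hright σ₂ h₂] at this
    exact this.1 h12
  refine ⟨ψ, fun σ hσ => ?_, hmaps, hright, fun α hα => hinj.leftInvOn_invFunOn hα⟩
  have himage : Ioo a b ⊆ ψ '' Ioi (f b) := fun α hα =>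
    ⟨f α, hanti (Ioo_subset_Ioc_self hα) ⟨hab, le_rfl⟩ hα.2, hinj.leftInvOn_invFunOn hα⟩
  have hnhds : ψ '' Ioi (f b) ∈ 𝓝 (ψ σ) :=
    mem_of_superset (Ioo_mem_nhds (hmaps hσ).1 (hmaps hσ).2) himage
  exact (hψanti.dual_right.continuousAt_of_image_mem_nhds (Ioi_mem_nhds hσ)
    hnhds).continuousWithinAt

/-- The function `m_σ` of the paper. -/
noncomputable def penalized (t : Polynomial ℝ) (p : ℕ) (σ s : ℝ) : ℝ :=
  t.eval s + σ / ((p : ℝ) + 1) * |s| ^ (p + 1)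

/-- The paper's `σ(α)`. -/
noncomputable def criticalSigma (t : Polynomial ℝ) (p : ℕ) (α : ℝ) : ℝ :=
  -t.derivative.eval α / α ^ p

section

variable {t : Polynomial ℝ} {p : ℕ}

lemma hasDerivAt_penalized (σ : ℝ) {x : ℝ} (hx : 0 < x) :
    HasDerivAt (penalized t p σ) (t.derivative.eval x + σ * x ^ p) x := by
  have hpow : HasDerivAt (fun s : ℝ => s ^ (p + 1)) (((p : ℝ) + 1) * x ^ p) x := by
    simpa using hasDerivAt_pow (p + 1) x
  have hsmooth := (t.hasDerivAt x).add (hpow.const_mul (σ / ((p : ℝ) + 1)))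
  refine (hsmooth.congr_deriv (by field_simp)).congr_of_eventuallyEq ?_
  filter_upwards [Ioi_mem_nhds hx] with s hs
  rw [penalized, abs_of_pos hs]
  rfl

lemma eval_derivative_add_eq_zero_of_isLocalMin {σ x : ℝ} (hx : 0 < x)
    (hmin : IsLocalMin (penalized t p σ) x) : t.derivative.eval x + σ * x ^ p = 0 :=
  (hasDerivAt_penalized σ hx).deriv ▸ hmin.deriv_eq_zero

lemma eval_derivative_add_eq_mul_sub_criticalSigma (σ : ℝ) {x : ℝ} (hx : x ≠ 0) :
    t.derivative.eval x + σ * x ^ p = x ^ p * (σ - criticalSigma t p x) := by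
  rw [criticalSigma]
  field_simp
  ring

lemma continuousAt_criticalSigma {x : ℝ} (hx : x ≠ 0) : ContinuousAt (criticalSigma t p) x :=
  t.derivative.continuous.continuousAt.neg.div (continuous_pow p).continuousAt (pow_ne_zero p hx)

lemma hasDerivAt_criticalSigma {x : ℝ} (hx : x ≠ 0) :
    HasDerivAt (criticalSigma t p)
      (-(t.derivative.derivative.eval x * x - p * t.derivative.eval x) / x ^ (p + 1)) x := by
  have h : HasDerivAt (fun α => -t.derivative.eval α / α ^ p)
      ((-t.derivative.derivative.eval x * x ^ p - -t.derivative.eval x * (p * x ^ (p - 1)))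
        / (x ^ p) ^ 2) x :=
    (t.derivative.hasDerivAt x).neg.div (hasDerivAt_pow p x) (pow_ne_zero p hx)
  refine h.congr_deriv ?_
  rcases p with _ | p
  · field_simp
    simp
  · simp only [Nat.cast_add, Nat.cast_one, add_tsub_cancel_right]
    field_simp
    ring

lemma strictAntiOn_criticalSigma {b : ℝ}
    (hg : ∀ α ∈ Ioo 0 b, 0 < t.derivative.derivative.eval α * α - p * t.derivative.eval α) :
    StrictAntiOn (criticalSigma t p) (Ioc 0 b) := by
  refine strictAntiOn_of_deriv_neg (convex_Ioc 0 b)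
    (fun x hx => (continuousAt_criticalSigma hx.1.ne').continuousWithinAt) ?_
  rw [interior_Ioc]
  intro x hx
  rw [(hasDerivAt_criticalSigma hx.1.ne').deriv, neg_div]
  exact neg_neg_of_pos (div_pos (hg x hx) (pow_pos hx.1 _))

lemma tendsto_criticalSigma_nhdsGT_zero (hp : p ≠ 0) (h0 : t.derivative.eval 0 < 0) :
    Tendsto (criticalSigma t p) (𝓝[>] 0) atTop := by
  have hnum : Tendsto (fun α => -t.derivative.eval α) (𝓝[>] 0) (𝓝 (-t.derivative.eval 0)) :=
    t.derivative.continuous.neg.continuousWithinAt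
  have hden : Tendsto (fun α : ℝ => α ^ p) (𝓝[>] 0) (𝓝[>] 0) := by
    refine tendsto_nhdsWithin_of_tendsto_nhds_of_eventually_within _ ?_ ?_
    · simpa [zero_pow hp] using ((continuous_pow p).tendsto (0 : ℝ)).mono_left nhdsWithin_le_nhds
    · filter_upwards [self_mem_nhdsWithin] with x hx using pow_pos (mem_Ioi.1 hx) p
  refine (hnum.pos_mul_atTop (neg_pos.2 h0) hden.inv_tendsto_nhdsGT_zero).congr fun α => ?_
  simp [criticalSigma, div_eq_mul_inv]

lemma isLocalMin_penalized_criticalSigma {b α : ℝ}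
    (hanti : StrictAntiOn (criticalSigma t p) (Ioo 0 b))
    (hα : α ∈ Ioo 0 b) : IsLocalMin (penalized t p (criticalSigma t p α)) α := by
  set σ := criticalSigma t p α
  have hder : ∀ s ∈ Ioo 0 b,
      HasDerivAt (penalized t p σ) (s ^ p * (σ - criticalSigma t p s)) s :=
    fun s hs => eval_derivative_add_eq_mul_sub_criticalSigma σ hs.1.ne' ▸
      hasDerivAt_penalized σ hs.1
  refine isLocalMin_of_deriv_Ioo hα.1 hα.2 (hder α hα).continuousAt
    (fun s hs => (hder s ⟨hs.1, hs.2.trans hα.2⟩).differentiableAt.differentiableWithinAt)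
    (fun s hs => (hder s ⟨hα.1.trans hs.1, hs.2⟩).differentiableAt.differentiableWithinAt)
    (fun s hs => ?_) (fun s hs => ?_)
  · have hs' : s ∈ Ioo 0 b := ⟨hs.1, hs.2.trans hα.2⟩
    rw [(hder s hs').deriv]
    exact mul_nonpos_of_nonneg_of_nonpos (pow_pos hs.1 p).le
      (sub_nonpos.2 (hanti hs' hα hs.2).le)
  · have hs' : s ∈ Ioo 0 b := ⟨hα.1.trans hs.1, hs.2⟩
    rw [(hder s hs').deriv]
    exact mul_nonneg (pow_pos hs'.1 p).le (sub_nonneg.2 (hanti hα hs' hs.1).le)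

theorem exists_bounded_minimizer_curve (hp : p ≠ 0) (h0 : t.derivative.eval 0 < 0) {b : ℝ}
    (hb : 0 < b)
    (hg : ∀ α ∈ Ioo 0 b, t.derivative.derivative.eval α * α - p * t.derivative.eval α ≠ 0)
    (hroot : t.derivative.eval b = 0) :
    Tendsto (criticalSigma t p) (𝓝[<] b) (𝓝 0) ∧
      ∃ ψ : ℝ → ℝ, ContinuousOn ψ (Ioi 0) ∧
        (∀ σ ∈ Ioi (0 : ℝ), IsLocalMin (penalized t p σ) (ψ σ)) ∧
        (∀ α ∈ Ioo 0 b, ψ (criticalSigma t p α) = α) ∧ ∃ M, ∀ σ ∈ Ioi (0 : ℝ), |ψ σ| ≤ M := by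
  have hzero : criticalSigma t p b = 0 := by simp [criticalSigma, hroot]
  have hgpos := pos_on_Ioo_of_ne_zero
    ((t.derivative.derivative.continuous.mul continuous_id).sub
      (continuous_const.mul t.derivative.continuous)).continuousOn
    (by simpa using mul_neg_of_pos_of_neg (Nat.cast_pos.2 (Nat.pos_of_ne_zero hp)) h0) hg
  have hanti := strictAntiOn_criticalSigma hgpos
  obtain ⟨ψ, hcont, hmaps, hright, hleft⟩ := exists_continuousOn_inverse_of_strictAntiOn hb
    (fun x hx => (continuousAt_criticalSigma hx.1.ne').continuousWithinAt) hanti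
    (tendsto_criticalSigma_nhdsGT_zero hp h0)
  rw [hzero] at hcont hmaps hright
  refine ⟨hzero ▸ (continuousAt_criticalSigma hb.ne').tendsto.mono_left nhdsWithin_le_nhds,
    ψ, hcont, fun σ hσ => ?_, hleft, b, fun σ hσ => ?_⟩
  · have := isLocalMin_penalized_criticalSigma (hanti.mono Ioo_subset_Ioc_self) (hmaps hσ)
    rwa [hright σ hσ] at this
  · exact (abs_of_pos (hmaps hσ).1).symm ▸ (hmaps hσ).2.le

theorem eval_derivative_eq_zero_of_minimizer_curve (h0 : t.derivative.eval 0 < 0) {b : ℝ}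
    (hroots : ∀ α ∈ Ioo 0 b, t.derivative.eval α ≠ 0) {ψ : ℝ → ℝ}
    (hmin : ∀ σ ∈ Ioi (0 : ℝ), IsLocalMin (penalized t p σ) (ψ σ))
    (hmaps : MapsTo ψ (Ioi 0) (Ioc 0 b)) : t.derivative.eval b = 0 := by
  by_contra hb
  have hbpos : 0 < b := (hmaps (mem_Ioi.2 one_pos)).1.trans_le (hmaps (mem_Ioi.2 one_pos)).2
  have hne : ∀ x ∈ Icc 0 b, 0 < |t.derivative.eval x| := by
    rintro x ⟨hx0, hxb⟩
    refine abs_pos.2 ?_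
    rcases hx0.eq_or_lt with rfl | hx0
    · exact h0.ne
    rcases hxb.eq_or_lt with rfl | hxb
    · exact hb
    exact hroots x ⟨hx0, hxb⟩
  obtain ⟨m, hm, hmle⟩ :=
    isCompact_Icc.exists_forall_le' t.derivative.continuous.abs.continuousOn hne
  set σ := m / (2 * b ^ p)
  have hσ : 0 < σ := by positivity
  obtain ⟨hx0, hxb⟩ := hmaps hσ
  have hfoc := eval_derivative_add_eq_zero_of_isLocalMin hx0 (hmin σ hσ)
  refine lt_irrefl m ?_
  calc m ≤ |t.derivative.eval (ψ σ)| := hmle (ψ σ) ⟨hx0.le, hxb⟩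
    _ = σ * ψ σ ^ p := by
      rw [eq_neg_of_add_eq_zero_left hfoc, abs_neg, abs_of_pos (by positivity)]
    _ ≤ σ * b ^ p := by gcongr
    _ = m / 2 := by rw [div_mul_eq_mul_div, mul_div_mul_right _ _ (pow_pos hbpos p).ne']
    _ < m := half_lt_self hm

end

theorem stmt_12_general (p : ℕ) (hp : 2 ≤ p) (t : Polynomial ℝ)
    (h0 : t.derivative.eval 0 < 0)
    (abar : ℝ)
    (hleast : IsLeast {α : ℝ | 0 < α ∧ (t.derivative.eval α = 0 ∨
      t.derivative.derivative.eval α * α - (p : ℝ) * t.derivative.eval α = 0)} abar) :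
    (t.derivative.eval abar = 0 →
      Filter.Tendsto (fun α : ℝ => -t.derivative.eval α / α ^ p)
        (nhdsWithin abar (Set.Iio abar)) (nhds 0) ∧
      ∃ ψ : ℝ → ℝ, ContinuousOn ψ (Set.Ioi 0) ∧
        (∀ σ ∈ Set.Ioi (0 : ℝ),
          IsLocalMin (fun s : ℝ => t.eval s + σ / ((p : ℝ) + 1) * |s| ^ (p + 1)) (ψ σ)) ∧
        (∀ α ∈ Set.Ioo 0 abar, ψ (-t.derivative.eval α / α ^ p) = α) ∧
        (∃ M : ℝ, ∀ σ ∈ Set.Ioi (0 : ℝ), |ψ σ| ≤ M)) ∧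
    ((∃ (I : Set ℝ) (ψ : ℝ → ℝ), I ⊆ Set.Ici 0 ∧ I.OrdConnected ∧ Set.Ioi 0 ⊆ I ∧
        ContinuousOn ψ I ∧
        (∀ σ ∈ I, IsLocalMin (fun s : ℝ => t.eval s + σ / ((p : ℝ) + 1) * |s| ^ (p + 1)) (ψ σ)) ∧
        (∃ M : ℝ, ∀ σ ∈ I, |ψ σ| ≤ M) ∧
        (∀ σ ∈ I, ψ σ ∈ Set.Ioc 0 abar)) →
      t.derivative.eval abar = 0) := by
  have hbelow : ∀ α ∈ Ioo 0 abar, t.derivative.eval α ≠ 0 ∧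
      t.derivative.derivative.eval α * α - p * t.derivative.eval α ≠ 0 := by
    intro α hα
    have hnot : α ∉ {α : ℝ | 0 < α ∧ (t.derivative.eval α = 0 ∨
        t.derivative.derivative.eval α * α - (p : ℝ) * t.derivative.eval α = 0)} :=
      fun hS => (hleast.2 hS).not_gt hα.2
    simpa [hα.1, not_or] using hnot
  refine ⟨fun hroot => exists_bounded_minimizer_curve (by omega) h0 hleast.1.1
    (fun α hα => (hbelow α hα).2) hroot, ?_⟩
  rintro ⟨I, ψ, -, -, hI, -, hmin, -, hIoc⟩
  exact eval_derivative_eq_zero_of_minimizer_curve h0 (fun α hα => (hbelow α hα).1)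
    (fun σ hσ => hmin σ (hI hσ)) (fun σ hσ => hIoc σ (hI hσ))

theorem stmt_12 (p : ℕ) (hp : 2 ≤ p) (t : Polynomial ℝ)
    (hdeg : t.natDegree = p) (h0 : t.derivative.eval 0 < 0)
    (abar : ℝ)
    (hleast : IsLeast {α : ℝ | 0 < α ∧ (t.derivative.eval α = 0 ∨
      t.derivative.derivative.eval α * α - (p : ℝ) * t.derivative.eval α = 0)} abar)
    (hsimple :
      (t.derivative.eval abar = 0 ∧ t.derivative.derivative.eval abar ≠ 0) ∨
      ((Polynomial.X * t.derivative.derivative - (p : ℝ) • t.derivative).eval abar = 0 ∧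
        ((Polynomial.X * t.derivative.derivative
          - (p : ℝ) • t.derivative).derivative).eval abar ≠ 0)) :
    (t.derivative.eval abar = 0 →
      Filter.Tendsto (fun α : ℝ => -t.derivative.eval α / α ^ p)
        (nhdsWithin abar (Set.Iio abar)) (nhds 0) ∧
      ∃ ψ : ℝ → ℝ, ContinuousOn ψ (Set.Ioi 0) ∧
        (∀ σ ∈ Set.Ioi (0 : ℝ),
          IsLocalMin (fun s : ℝ => t.eval s + σ / ((p : ℝ) + 1) * |s| ^ (p + 1)) (ψ σ)) ∧
        (∀ α ∈ Set.Ioo 0 abar, ψ (-t.derivative.eval α / α ^ p) = α) ∧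
        (∃ M : ℝ, ∀ σ ∈ Set.Ioi (0 : ℝ), |ψ σ| ≤ M)) ∧
    ((∃ (I : Set ℝ) (ψ : ℝ → ℝ), I ⊆ Set.Ici 0 ∧ I.OrdConnected ∧ Set.Ioi 0 ⊆ I ∧
        ContinuousOn ψ I ∧
        (∀ σ ∈ I, IsLocalMin (fun s : ℝ => t.eval s + σ / ((p : ℝ) + 1) * |s| ^ (p + 1)) (ψ σ)) ∧
        (∃ M : ℝ, ∀ σ ∈ I, |ψ σ| ≤ M) ∧
        (∀ σ ∈ I, ψ σ ∈ Set.Ioc 0 abar)) →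
      t.derivative.eval abar = 0) :=
  stmt_12_general p hp t h0 abar hleast
end
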